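/- Let N ≥ 2, let A(s) be the real symmetric 2×2 matrix with entries A₁₁ = 1 − s − (1−s)/N, A₂₂ = 1 − (1−s)(N−1)/N, A₁₂ = A₂₁ = −(1−s)√(N−1)/N, let φ : [0,1] → ℝ² be a continuously differentiable family of unit ground-state eigenvectors of A(s) (eigenvalue (1 − Δ(s))/2 with Δ(s) = √(1 − 4(1 − 1/N)s(1−s))), and let s_o(τ) = 1/2 + (1/(2√(N−1))) tan((2τ − 1) arctan(√(N−1))). Then the reparametrized eigenpath τ ↦ φ(s_o(τ)) has constant speed: ‖(d/dτ) φ(s_o(τ))‖ = arctan(√(N−1)) for all τ ∈ [0,1]. That is, the optimal schedule for the adiabatic Grover problem is a constant speed schedule. -/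

import Mathlib

/-!
Put `r = √(N-1)` and `α = arctan r`. For `θ = (1-τ)α` and `x = 2θ` one has
`(2τ-1)α = α - x`, so `tan ((2τ-1)α) = (r cos x - sin x) / (cos x + r sin x)`; at the resulting
`s = s_o(τ)` a direct computation shows that `(cos θ, sin θ)` is an eigenvector of `A(s)` for
`(1 - Δ(s))/2`, with `Δ(s) = 1 / (cos x + r sin x) > 0`. As `A(s)` has trace `1`, its two
eigenvalues differ by `Δ(s)`, so the ground eigenspace is a line and
`φ(s_o(τ)) = ±(cos θ, sin θ)`; by continuity the sign is the same for all `τ ∈ [0,1]`.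
Hence `τ ↦ φ(s_o(τ))` runs along the unit circle at angular speed `α`.
-/

open Real Set Matrix

theorem Matrix.trace_sub_two_mul_mul_cross_eq_zero {R : Type*} [CommRing R]
    {M : Matrix (Fin 2) (Fin 2) R} {μ : R} {v w : Fin 2 → R}
    (hv : M *ᵥ v = μ • v) (hw : M *ᵥ w = μ • w) :
    (M.trace - 2 * μ) * (v 0 * w 1 - v 1 * w 0) = 0 := by
  have hv0 := congrFun hv 0
  have hv1 := congrFun hv 1
  have hw0 := congrFun hw 0
  have hw1 := congrFun hw 1
  simp only [mulVec, dotProduct, Fin.sum_univ_two, Pi.smul_apply, smul_eq_mul] at hv0 hv1 hw0 hw1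
  rw [trace_fin_two]
  linear_combination w 1 * hv0 - v 1 * hw0 + v 0 * hw1 - w 0 * hv1

theorem EuclideanSpace.exists_eq_smul_of_cross_eq_zero {v w : EuclideanSpace ℝ (Fin 2)}
    (hw : ‖w‖ = 1) (h : v 0 * w 1 - v 1 * w 0 = 0) : ∃ c : ℝ, v = c • w := by
  have hw2 : w 0 ^ 2 + w 1 ^ 2 = 1 := by
    rw [← Fin.sum_univ_two (fun i => w i ^ 2), ← EuclideanSpace.real_norm_sq_eq, hw, one_pow]
  refine ⟨v 0 * w 0 + v 1 * w 1, PiLp.ext (Fin.forall_fin_two.2 ⟨?_, ?_⟩)⟩ <;>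
    simp only [PiLp.smul_apply, smul_eq_mul]
  · linear_combination (-v 0) * hw2 + w 1 * h
  · linear_combination (-v 1) * hw2 - w 0 * h

theorem EuclideanSpace.norm_toLp_eq_one {a b : ℝ} (h : a ^ 2 + b ^ 2 = 1) :
    ‖!₂[a, b]‖ = 1 := by
  simp [EuclideanSpace.norm_eq, h]

theorem hasDerivAt_toLp_cos_sin {f : ℝ → ℝ} {f' t : ℝ} (hf : HasDerivAt f f' t) :
    HasDerivAt (fun t => !₂[cos (f t), sin (f t)]) (f' • !₂[-sin (f t), cos (f t)]) t := by
  have h : HasDerivAt (fun t => ![cos (f t), sin (f t)]) (f' • ![-sin (f t), cos (f t)]) t := by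
    rw [hasDerivAt_pi]
    intro i
    fin_cases i
    · simpa [mul_comm] using hf.cos
    · simpa [mul_comm] using hf.sin
  exact (PiLp.hasFDerivAt_toLp 2 _).comp_hasDerivAt t h

theorem IsPreconnected.eqOn_or_eqOn_neg_of_exists_eq_smul {X E : Type*} [TopologicalSpace X]
    [NormedAddCommGroup E] [InnerProductSpace ℝ E] {S : Set X} {f g : X → E}
    (hS : IsPreconnected S) (hf : ContinuousOn f S) (hg : ContinuousOn g S)
    (hfn : ∀ x ∈ S, ‖f x‖ = 1) (hgn : ∀ x ∈ S, ‖g x‖ = 1)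
    (hfg : ∀ x ∈ S, ∃ c : ℝ, f x = c • g x) : EqOn f g S ∨ EqOn f (-g) S := by
  set G : X → ℝ := fun x => inner ℝ (g x) (f x)
  have hfG : ∀ x ∈ S, f x = G x • g x := by
    intro x hx
    obtain ⟨c, hc⟩ := hfg x hx
    simp [G, hc, inner_smul_right, hgn x hx]
  have hG : EqOn (G ^ 2) 1 S := by
    intro x hx
    have h := hfn x hx
    rw [hfG x hx, norm_smul, hgn x hx, mul_one, Real.norm_eq_abs] at h
    simp [← sq_abs, h]
  rcases hS.eq_one_or_eq_neg_one_of_sq_eq (hg.inner hf) hG with h | h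
  · exact .inl fun x hx => by rw [hfG x hx, show G x = 1 from h hx, one_smul]
  · exact .inr fun x hx => by rw [hfG x hx, show G x = -1 from h hx, neg_one_smul, Pi.neg_apply]

theorem deriv_eq_of_hasDerivAt_of_eqOn {E : Type*} [NormedAddCommGroup E] [NormedSpace ℝ E]
    {f g : ℝ → E} {g' : E} {s : Set ℝ} {x : ℝ} (hg : HasDerivAt g g' x)
    (hf : DifferentiableAt ℝ f x) (hs : UniqueDiffWithinAt ℝ s x) (hx : x ∈ s)
    (hfg : EqOn f g s) : deriv f x = g' :=
  hs.eq_deriv s hf.hasDerivAt.hasDerivWithinAt (hg.hasDerivWithinAt.congr hfg (hfg hx))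

theorem cos_arctan_sub (r x : ℝ) : cos (arctan r - x) = cos (arctan r) * (cos x + r * sin x) := by
  rw [cos_sub, sin_arctan, cos_arctan]
  ring

theorem sin_arctan_sub (r x : ℝ) : sin (arctan r - x) = cos (arctan r) * (r * cos x - sin x) := by
  rw [sin_sub, sin_arctan, cos_arctan]
  ring

theorem tan_arctan_sub (r x : ℝ) :
    tan (arctan r - x) = (r * cos x - sin x) / (cos x + r * sin x) := by
  rw [tan_eq_sin_div_cos, sin_arctan_sub, cos_arctan_sub,
    mul_div_mul_left _ _ (cos_arctan_pos r).ne']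

theorem mul_arctan_mem_Ioo {t : ℝ} (ht : |t| ≤ 1) (r : ℝ) :
    t * arctan r ∈ Ioo (-(π / 2)) (π / 2) := by
  rw [mem_Ioo, ← abs_lt, abs_mul]
  calc |t| * |arctan r| ≤ |arctan r| := mul_le_of_le_one_left (abs_nonneg _) ht
    _ < π / 2 := abs_lt.2 ⟨neg_pi_div_two_lt_arctan r, arctan_lt_pi_div_two r⟩

theorem cos_mul_arctan_pos {t : ℝ} (ht : |t| ≤ 1) (r : ℝ) : 0 < cos (t * arctan r) :=
  cos_pos_of_mem_Ioo (mul_arctan_mem_Ioo ht r)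

theorem abs_tan_mul_arctan_le {t r : ℝ} (ht : |t| ≤ 1) (hr : 0 ≤ r) :
    |tan (t * arctan r)| ≤ r := by
  have hα : 0 ≤ arctan r := arctan_nonneg.2 hr
  obtain ⟨hlo, hhi⟩ := abs_le.1 ht
  have hmem := mul_arctan_mem_Ioo ht r
  refine abs_le.2 ⟨?_, ?_⟩
  · simpa [tan_arctan] using strictMonoOn_tan.monotoneOn
      (mul_arctan_mem_Ioo (by simp) r) hmem (mul_le_mul_of_nonneg_right hlo hα)
  · simpa [tan_arctan] using strictMonoOn_tan.monotoneOn
      hmem (mul_arctan_mem_Ioo (by simp) r) (mul_le_mul_of_nonneg_right hhi hα)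

theorem abs_two_mul_sub_one_le_one {τ : ℝ} (hτ : τ ∈ Icc (0 : ℝ) 1) : |2 * τ - 1| ≤ 1 :=
  abs_le.2 ⟨by linarith [hτ.1], by linarith [hτ.2]⟩

noncomputable def groverMatrix (n r s : ℝ) : Matrix (Fin 2) (Fin 2) ℝ :=
  !![1 - s - (1 - s) / n, -(1 - s) * r / n; -(1 - s) * r / n, 1 - (1 - s) * (n - 1) / n]

noncomputable def groverGap (n s : ℝ) : ℝ := √(1 - 4 * (1 - 1 / n) * s * (1 - s))

noncomputable def groverSchedule (n τ : ℝ) : ℝ :=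
  1 / 2 + (1 / (2 * √(n - 1))) * tan ((2 * τ - 1) * arctan √(n - 1))

theorem groverMatrix_trace {n : ℝ} (hn : n ≠ 0) (r s : ℝ) : (groverMatrix n r s).trace = 1 := by
  rw [groverMatrix, trace_fin_two_of]
  field_simp
  ring

theorem groverMatrix_mulVec_cos_sin {n r θ : ℝ} (hn : n ≠ 0) (hr : r ≠ 0) (hrn : r ^ 2 = n - 1)
    (hD : cos (2 * θ) + r * sin (2 * θ) ≠ 0) :
    groverMatrix n r (1 / 2 + (r * cos (2 * θ) - sin (2 * θ)) /
        (2 * r * (cos (2 * θ) + r * sin (2 * θ)))) *ᵥ ![cos θ, sin θ] =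
      ((1 - 1 / (cos (2 * θ) + r * sin (2 * θ))) / 2) • ![cos θ, sin θ] := by
  have hcs := cos_sq_add_sin_sq θ
  rw [cos_two_mul', sin_two_mul] at hD ⊢
  generalize hDdef : cos θ ^ 2 - sin θ ^ 2 + r * (2 * sin θ * cos θ) = D at hD ⊢
  generalize hEdef : r * (cos θ ^ 2 - sin θ ^ 2) - 2 * sin θ * cos θ = E
  refine funext (Fin.forall_fin_two.2 ⟨?_, ?_⟩) <;>
    simp only [groverMatrix, mulVec, of_apply, vec2_dotProduct, cons_val_zero, cons_val_one,
      Pi.smul_apply, smul_eq_mul] <;>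
    field_simp
  · linear_combination (-r * n * cos θ) * hcs + (-2 * sin θ * cos θ * (cos θ + r * sin θ)) * hrn
      + (r * (cos θ + r * sin θ)) * hDdef + ((n - 1) * cos θ - r * sin θ) * hEdef
  · linear_combination (-r * n * sin θ) * hcs + (2 * sin θ * cos θ * (sin θ - r * cos θ)) * hrn
      + (-r * (sin θ - r * cos θ)) * hDdef - (r * cos θ + (n - 1) * sin θ) * hEdef

theorem groverGap_eq_one_div {n r x : ℝ} (hn : n ≠ 0) (hr : r ≠ 0) (hrn : r ^ 2 = n - 1)
    (hD : 0 < cos x + r * sin x) :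
    groverGap n (1 / 2 + (r * cos x - sin x) / (2 * r * (cos x + r * sin x))) =
      1 / (cos x + r * sin x) := by
  have hcs := cos_sq_add_sin_sq x
  have hsq : 1 - 4 * (1 - 1 / n) * (1 / 2 + (r * cos x - sin x) / (2 * r * (cos x + r * sin x))) *
      (1 - (1 / 2 + (r * cos x - sin x) / (2 * r * (cos x + r * sin x)))) =
        (1 / (cos x + r * sin x)) ^ 2 := by
    field_simp
    linear_combination (4 * (n - 1)) * (1 + r ^ 2) * hcs + (4 * (cos x + r * sin x) ^ 2 - 4) * hrn
  rw [groverGap, hsq, sqrt_sq (by positivity)]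

theorem differentiableAt_groverSchedule (n : ℝ) {τ : ℝ} (hτ : τ ∈ Icc (0 : ℝ) 1) :
    DifferentiableAt ℝ (groverSchedule n) τ := by
  have hcos := (cos_mul_arctan_pos (abs_two_mul_sub_one_le_one hτ) √(n - 1)).ne'
  have h : DifferentiableAt ℝ (fun τ => tan ((2 * τ - 1) * arctan √(n - 1))) τ :=
    (differentiableAt_tan.2 hcos).comp (g := tan) τ (by fun_prop)
  exact (h.const_mul _).const_add _

theorem groverSchedule_mem_Icc {n τ : ℝ} (hn : 1 < n) (hτ : τ ∈ Icc (0 : ℝ) 1) :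
    groverSchedule n τ ∈ Icc (0 : ℝ) 1 := by
  have hr : 0 < √(n - 1) := sqrt_pos.2 (by linarith)
  obtain ⟨hlo, hhi⟩ := abs_le.1 (abs_tan_mul_arctan_le (abs_two_mul_sub_one_le_one hτ) hr.le)
  have hlo' : -1 ≤ tan ((2 * τ - 1) * arctan √(n - 1)) / √(n - 1) := by
    rw [le_div_iff₀ hr]; linarith
  have hhi' : tan ((2 * τ - 1) * arctan √(n - 1)) / √(n - 1) ≤ 1 := by
    rw [div_le_iff₀ hr]; linarith
  rw [groverSchedule, mem_Icc]
  constructor <;> nlinarith [show 1 / (2 * √(n - 1)) * tan ((2 * τ - 1) * arctan √(n - 1)) =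
    tan ((2 * τ - 1) * arctan √(n - 1)) / √(n - 1) / 2 by ring]

theorem groverSchedule_spec {n τ : ℝ} (hn : 1 < n) (hτ : τ ∈ Icc (0 : ℝ) 1) :
    0 < groverGap n (groverSchedule n τ) ∧
      groverMatrix n √(n - 1) (groverSchedule n τ) *ᵥ
          ![cos ((1 - τ) * arctan √(n - 1)), sin ((1 - τ) * arctan √(n - 1))] =
        ((1 - groverGap n (groverSchedule n τ)) / 2) •
          ![cos ((1 - τ) * arctan √(n - 1)), sin ((1 - τ) * arctan √(n - 1))] := by
  set r := √(n - 1)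
  set θ := (1 - τ) * arctan r
  have hr : 0 < r := sqrt_pos.2 (by linarith)
  have hrn : r ^ 2 = n - 1 := sq_sqrt (by linarith)
  have hn0 : n ≠ 0 := by linarith
  have hu : (2 * τ - 1) * arctan r = arctan r - 2 * θ := by ring
  have hD : 0 < cos (2 * θ) + r * sin (2 * θ) := by
    have h := cos_mul_arctan_pos (abs_two_mul_sub_one_le_one hτ) r
    rw [hu, cos_arctan_sub] at h
    exact pos_of_mul_pos_right h (cos_arctan_pos r).le
  have hs : groverSchedule n τ = 1 / 2 + (r * cos (2 * θ) - sin (2 * θ)) /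
      (2 * r * (cos (2 * θ) + r * sin (2 * θ))) := by
    rw [groverSchedule, show √(n - 1) = r from rfl, hu, tan_arctan_sub]
    field_simp
  rw [hs, groverGap_eq_one_div hn0 hr.ne' hrn hD]
  exact ⟨by positivity, groverMatrix_mulVec_cos_sin hn0 hr.ne' hrn hD.ne'⟩

theorem exists_eq_smul_of_mulVec_groverMatrix_groverSchedule {n τ : ℝ} (hn : 1 < n)
    (hτ : τ ∈ Icc (0 : ℝ) 1) {v : EuclideanSpace ℝ (Fin 2)}
    (hv : groverMatrix n √(n - 1) (groverSchedule n τ) *ᵥ v =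
      ((1 - groverGap n (groverSchedule n τ)) / 2) • v) :
    ∃ c : ℝ, v = c • !₂[cos ((1 - τ) * arctan √(n - 1)), sin ((1 - τ) * arctan √(n - 1))] := by
  obtain ⟨hgap, hw⟩ := groverSchedule_spec hn hτ
  refine EuclideanSpace.exists_eq_smul_of_cross_eq_zero
    (EuclideanSpace.norm_toLp_eq_one (cos_sq_add_sin_sq _)) ?_
  have h := trace_sub_two_mul_mul_cross_eq_zero hv hw
  rw [groverMatrix_trace (by positivity)] at h
  exact (mul_eq_zero.1 h).resolve_left (by linarith)

/-- For `N ≥ 2`, let `A(s)` be the `2×2` matrix of the Grover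
interpolation Hamiltonian on its invariant subspace, `φ` a continuously differentiable
family of unit ground-state eigenvectors of `A(s)` (eigenvalue `(1 − Δ(s))/2` with
`Δ(s) = √(1 − 4(1 − 1/N)s(1−s))`), and `s_o` the Roland–Cerf optimal schedule.
Then the reparametrized eigenpath `τ ↦ φ(s_o(τ))` has constant speed:
`‖(d/dτ) φ(s_o(τ))‖ = arctan √(N−1)` for all `τ ∈ [0,1]`. That is, the optimal
schedule for the adiabatic Grover problem is a constant speed schedule. -/
theorem grover_optimal_schedule_is_constant_speed
    (N : ℕ) (hN : 2 ≤ N)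
    (Δ : ℝ → ℝ)
    (hΔ : ∀ s, Δ s = Real.sqrt (1 - 4 * (1 - 1 / (N : ℝ)) * s * (1 - s)))
    (A : ℝ → Matrix (Fin 2) (Fin 2) ℝ)
    (hA : ∀ s, A s =
      !![1 - s - (1 - s) / (N : ℝ), -(1 - s) * Real.sqrt ((N : ℝ) - 1) / (N : ℝ);
         -(1 - s) * Real.sqrt ((N : ℝ) - 1) / (N : ℝ), 1 - (1 - s) * ((N : ℝ) - 1) / (N : ℝ)])
    (φ : ℝ → EuclideanSpace ℝ (Fin 2)) (hφ : ContDiff ℝ 1 φ)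
    (hunit : ∀ s ∈ Set.Icc (0 : ℝ) 1, ‖φ s‖ = 1)
    (heig : ∀ s ∈ Set.Icc (0 : ℝ) 1,
      (A s).mulVec (fun j => φ s j) = fun i => ((1 - Δ s) / 2) * φ s i)
    (so : ℝ → ℝ)
    (hso : ∀ τ, so τ = 1 / 2 + (1 / (2 * Real.sqrt ((N : ℝ) - 1)))
      * Real.tan ((2 * τ - 1) * Real.arctan (Real.sqrt ((N : ℝ) - 1)))) :
    ∀ τ ∈ Set.Icc (0 : ℝ) 1,
      ‖deriv (fun t => φ (so t)) τ‖ = Real.arctan (Real.sqrt ((N : ℝ) - 1)) := by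
  have hn : (1 : ℝ) < N := Nat.one_lt_cast.2 hN
  obtain rfl : A = groverMatrix N √(N - 1) := funext hA
  obtain rfl : Δ = groverGap N := funext hΔ
  obtain rfl : so = groverSchedule N := funext hso
  set α := arctan √((N : ℝ) - 1)
  set ψ : ℝ → EuclideanSpace ℝ (Fin 2) := fun τ => !₂[cos ((1 - τ) * α), sin ((1 - τ) * α)]
  have hψ : ∀ τ, HasDerivAt ψ ((-α) • !₂[-sin ((1 - τ) * α), cos ((1 - τ) * α)]) τ :=
    fun τ => hasDerivAt_toLp_cos_sin (by simpa using ((hasDerivAt_id τ).const_sub 1).mul_const α)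
  have hsign := isPreconnected_Icc.eqOn_or_eqOn_neg_of_exists_eq_smul
    (fun τ hτ => (hφ.continuous.continuousAt.comp
      (differentiableAt_groverSchedule N hτ).continuousAt).continuousWithinAt)
    (fun τ _ => (hψ τ).continuousAt.continuousWithinAt)
    (fun τ hτ => hunit _ (groverSchedule_mem_Icc hn hτ))
    (fun τ _ => EuclideanSpace.norm_toLp_eq_one (cos_sq_add_sin_sq _))
    (fun τ hτ => exists_eq_smul_of_mulVec_groverMatrix_groverSchedule hn hτ
      (heig _ (groverSchedule_mem_Icc hn hτ)))
  intro τ hτ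
  have hd : DifferentiableAt ℝ (fun t => φ (groverSchedule N t)) τ :=
    (hφ.differentiable one_ne_zero _).comp τ (differentiableAt_groverSchedule N hτ)
  have hu := uniqueDiffOn_Icc zero_lt_one τ hτ
  have hα : 0 ≤ α := arctan_nonneg.2 (sqrt_nonneg _)
  have hψ'_norm : ‖!₂[-sin ((1 - τ) * α), cos ((1 - τ) * α)]‖ = 1 :=
    EuclideanSpace.norm_toLp_eq_one (by rw [neg_sq, sin_sq_add_cos_sq])
  rcases hsign with h | h
  · rw [deriv_eq_of_hasDerivAt_of_eqOn (hψ τ) hd hu hτ h, norm_smul, hψ'_norm]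
    simp [abs_of_nonneg hα]
  · rw [deriv_eq_of_hasDerivAt_of_eqOn (hψ τ).neg hd hu hτ h, norm_neg, norm_smul, hψ'_norm]
    simp [abs_of_nonneg hα]
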